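/- arXiv:math/0408381 — 3 statements merged into one kernel-verified Lean document; each statement's English description precedes it below -/
import Mathlib

section
/- Let 0 < θ ≤ 1/2 and let q be a positive integer. Then there exists a finite set W of q-tuples (c_1, …, c_q) of non-negative reals with c_1 + ⋯ + c_q = 1, of cardinality at most (e/θ)^(q−1), such that: for every tuple of reals A_1, …, A_q and every real Λ with A_j ≤ 0 for all j and A_1 + ⋯ + A_q ≤ −Λ, there exists (c_1, …, c_q) ∈ W with A_j ≤ −c_j·(1−θ)·Λ for j = 1, …, q. -/
open Finset

/-- If `N` is at most the sum of `n` over `s`, we can find `k ≤ n` pointwise whose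
sum over `s` is exactly `N`. -/
lemma aux_exists_sum {ι : Type*} [DecidableEq ι] (s : Finset ι) (n : ι → ℕ) :
    ∀ N : ℕ, N ≤ ∑ i ∈ s, n i → ∃ k : ι → ℕ, (∀ i, k i ≤ n i) ∧ ∑ i ∈ s, k i = N := by
  induction s using Finset.cons_induction with
  | empty =>
    intro N hN
    simp only [Finset.sum_empty, Nat.le_zero] at hN
    exact ⟨fun _ => 0, fun i => Nat.zero_le _, by simp [hN]⟩
  | @cons a s ha ih =>
    intro N hN
    rw [Finset.sum_cons] at hN
    obtain ⟨k, hk, hks⟩ := ih (N - min N (n a)) (by omega)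
    refine ⟨Function.update k a (min N (n a)), ?_, ?_⟩
    · intro i
      rcases eq_or_ne i a with rfl | h
      · simp only [Function.update_self]; exact min_le_right _ _
      · simpa [Function.update_of_ne h] using hk i
    · have hcongr : ∑ x ∈ s, Function.update k a (min N (n a)) x = ∑ x ∈ s, k x :=
        Finset.sum_congr rfl fun i hi =>
          Function.update_of_ne (by rintro rfl; exact ha hi) _ _
      rw [Finset.sum_cons, Function.update_self, hcongr, hks]
      omega

/-- `k^k ≤ k! * e^(k-1)` for `k ≥ 1`. -/
lemma aux_pow_self_le (k : ℕ) (hk : 1 ≤ k) :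
    ((k : ℝ)) ^ k ≤ (k.factorial : ℝ) * Real.exp 1 ^ (k - 1) := by
  induction k with
  | zero => omega
  | succ k ih =>
    rcases Nat.eq_zero_or_pos k with rfl | hk0
    · norm_num
    · have ihk := ih hk0
      have hkR : (0:ℝ) < k := by exact_mod_cast hk0
      have h1 : ((k:ℝ)+1)^k ≤ (k:ℝ)^k * Real.exp 1 := by
        have h2 : (k:ℝ)+1 = (k:ℝ) * (1 + 1/k) := by field_simp
        rw [h2, mul_pow]
        have h3 : (1 + 1/(k:ℝ))^k ≤ Real.exp (1/k) ^ k := by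
          apply pow_le_pow_left₀ (by positivity)
          linarith [Real.add_one_le_exp (1/(k:ℝ))]
        have h4 : Real.exp (1/(k:ℝ)) ^ k = Real.exp 1 := by
          rw [← Real.exp_nat_mul]
          congr 1
          field_simp
        have h5 : (0:ℝ) ≤ (k:ℝ)^k := by positivity
        calc (k:ℝ)^k * (1 + 1/(k:ℝ))^k ≤ (k:ℝ)^k * (Real.exp (1/k))^k :=
              mul_le_mul_of_nonneg_left h3 h5
          _ = (k:ℝ)^k * Real.exp 1 := by rw [h4]
      have hE : (0:ℝ) < Real.exp 1 := Real.exp_pos 1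
      have hfact : (0:ℝ) < (k.factorial : ℝ) := by exact_mod_cast k.factorial_pos
      have hEk : Real.exp 1 ^ (k-1) * Real.exp 1 = Real.exp 1 ^ k := by
        rw [← pow_succ]
        congr 1
        omega
      have hstep : ((k:ℝ)+1)^k ≤ ((k.factorial : ℝ) * Real.exp 1 ^ (k-1)) * Real.exp 1 := by
        calc ((k:ℝ)+1)^k ≤ (k:ℝ)^k * Real.exp 1 := h1
          _ ≤ ((k.factorial : ℝ) * Real.exp 1 ^ (k-1)) * Real.exp 1 :=
              mul_le_mul_of_nonneg_right ihk hE.le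
      have hgoal : (((k+1:ℕ)):ℝ)^(k+1) ≤ ((k+1).factorial : ℝ) * Real.exp 1 ^ k := by
        push_cast
        have : ((k:ℝ)+1)^(k+1) = ((k:ℝ)+1) * ((k:ℝ)+1)^k := by ring
        rw [this]
        calc ((k:ℝ)+1) * ((k:ℝ)+1)^k
            ≤ ((k:ℝ)+1) * (((k.factorial : ℝ) * Real.exp 1 ^ (k-1)) * Real.exp 1) :=
              mul_le_mul_of_nonneg_left hstep (by positivity)
          _ = ((k:ℝ)+1) * (k.factorial : ℝ) * (Real.exp 1 ^ (k-1) * Real.exp 1) := by ring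
          _ = ((k+1).factorial : ℝ) * Real.exp 1 ^ k := by
              rw [hEk, Nat.factorial_succ]
              push_cast
              ring
      exact hgoal

/-- Combinatorial lemma (Evertse): for `0 < θ ≤ 1/2` and `q ≥ 1` there is a set `W`
of at most `(e/θ)^(q-1)` tuples in the standard simplex of `ℝ^q` such that whenever
`A_1, …, A_q ≤ 0` and `Σ A_j ≤ -Λ`, some `c ∈ W` satisfies `A_j ≤ -c_j (1-θ) Λ` for all `j`. -/
theorem simplex_covering_lemma (θ : ℝ) (hθ0 : 0 < θ) (hθ : θ ≤ 1 / 2)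
    (q : ℕ) (hq : 0 < q) :
    ∃ W : Finset (Fin q → ℝ),
      (W.card : ℝ) ≤ (Real.exp 1 / θ) ^ (q - 1) ∧
      (∀ c ∈ W, (∀ j, 0 ≤ c j) ∧ ∑ j, c j = 1) ∧
      (∀ (A : Fin q → ℝ) (Λ : ℝ), (∀ j, A j ≤ 0) → (∑ j, A j) ≤ -Λ →
        ∃ c ∈ W, ∀ j, A j ≤ -(c j * (1 - θ) * Λ)) := by
  classical
  have hθ1 : θ < 1 := lt_of_le_of_lt hθ (by norm_num)
  have h1θ : (0:ℝ) < 1 - θ := by linarith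
  set x : ℝ := ((q - 1 : ℕ) : ℝ) * (1 - θ) / θ with hxdef
  have hx0 : 0 ≤ x := by positivity
  set N : ℕ := max 1 ⌈x⌉₊ with hNdef
  have hN1 : 1 ≤ N := le_max_left _ _
  have hN0 : (0:ℝ) < (N:ℝ) := by exact_mod_cast hN1
  have hNx : x ≤ (N:ℝ) := le_trans (Nat.le_ceil x) (by exact_mod_cast le_max_right 1 ⌈x⌉₊)
  set W : Finset (Fin q → ℝ) :=
    (Finset.piAntidiag (Finset.univ : Finset (Fin q)) N).image (fun k j => (k j : ℝ) / N) with hWdef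
  have hsimplex : ∀ c ∈ W, (∀ j, 0 ≤ c j) ∧ ∑ j, c j = 1 := by
    intro c hc
    rw [hWdef, Finset.mem_image] at hc
    obtain ⟨kk, hkk, rfl⟩ := hc
    rw [Finset.mem_piAntidiag] at hkk
    constructor
    · intro j; positivity
    · rw [← Finset.sum_div]
      rw [show (∑ j, ((kk j : ℝ))) = ((∑ j, kk j : ℕ) : ℝ) by push_cast; rfl, hkk.1]
      exact div_self hN0.ne'
  refine ⟨W, ?_, hsimplex, ?_⟩
  · -- cardinality bound
    have hcard1 : W.card ≤ (Finset.piAntidiag (Finset.univ : Finset (Fin q)) N).card :=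
      Finset.card_image_le
    have hcard2 : (Finset.piAntidiag (Finset.univ : Finset (Fin q)) N).card
        = (N + (q-1)).choose (q-1) := by
      rw [← Finset.map_sym_eq_piAntidiag, Finset.card_map, Finset.sym_univ, Finset.card_univ,
        Sym.card_sym_eq_multichoose, Fintype.card_fin, Nat.multichoose_eq]
      have h : q + N - 1 = N + (q - 1) := by omega
      rw [h]
      have h2 := Nat.choose_symm (show N ≤ N + (q-1) from Nat.le_add_right _ _)
      rw [← h2]
      congr 1
      omega
    have hmain : (((N + (q-1)).choose (q-1) : ℕ) : ℝ) ≤ (Real.exp 1 / θ) ^ (q-1) := by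
      by_cases hk0 : q - 1 = 0
      · simp [hk0]
      · set k := q - 1 with hkdef
        have hk1 : 1 ≤ k := Nat.one_le_iff_ne_zero.mpr hk0
        have hK : (1:ℝ) ≤ (k:ℝ) := by exact_mod_cast hk1
        have hK0 : (0:ℝ) < (k:ℝ) := by linarith
        have hE : (0:ℝ) < Real.exp 1 := Real.exp_pos 1
        -- A : choose * k! ≤ (N+k)^k
        have hA : (((N+k).choose k : ℕ) : ℝ) * (k.factorial : ℝ) ≤ (((N+k : ℕ)):ℝ)^k := by
          have h : (N+k).choose k * k.factorial ≤ (N+k)^k := by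
            rw [mul_comm, ← Nat.descFactorial_eq_factorial_mul_choose]
            exact Nat.descFactorial_le_pow _ _
          exact_mod_cast h
        have hB := aux_pow_self_le k hk1
        -- n ≤ K/θ + 1
        have hceil1 : 1 ≤ ⌈x⌉₊ := by
          rw [Nat.one_le_ceil_iff]
          have h1 : (1:ℝ) ≤ (1-θ)/θ := by
            rw [le_div_iff₀ hθ0]; linarith
          have : (1:ℝ) ≤ x := by
            rw [hxdef, mul_div_assoc]
            calc (1:ℝ) = 1 * 1 := by ring
              _ ≤ ((q-1:ℕ):ℝ) * ((1-θ)/θ) := by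
                  apply mul_le_mul _ h1 (by norm_num) (by positivity)
                  exact_mod_cast hk1
          linarith
        have hNeq : N = ⌈x⌉₊ := max_eq_right hceil1
        have hNup : (N:ℝ) < x + 1 := by rw [hNeq]; exact Nat.ceil_lt_add_one hx0
        have hn : (((N+k:ℕ)):ℝ) ≤ (k:ℝ)/θ + 1 := by
          have hxk : x + (k:ℝ) = (k:ℝ)/θ := by
            rw [hxdef]
            have : ((q-1:ℕ):ℝ) = (k:ℝ) := by rw [hkdef]
            rw [this]
            field_simp
            ring
          push_cast
          linarith
        have hC : (((N+k:ℕ)):ℝ)^k ≤ ((k:ℝ)/θ)^k * Real.exp 1 := by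
          have hfe : (k:ℝ)/θ + 1 = ((k:ℝ)/θ) * (1 + θ/(k:ℝ)) := by
            field_simp
          have h3 : (1 + θ/(k:ℝ))^k ≤ Real.exp (θ/(k:ℝ)) ^ k := by
            apply pow_le_pow_left₀ (by positivity)
            linarith [Real.add_one_le_exp (θ/(k:ℝ))]
          have h4 : Real.exp (θ/(k:ℝ)) ^ k = Real.exp θ := by
            rw [← Real.exp_nat_mul]
            congr 1
            field_simp
          have h5 : Real.exp θ ≤ Real.exp 1 := Real.exp_le_exp.mpr (by linarith)
          calc (((N+k:ℕ)):ℝ)^k ≤ ((k:ℝ)/θ + 1)^k := by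
                apply pow_le_pow_left₀ (by positivity) hn
            _ = ((k:ℝ)/θ)^k * (1 + θ/(k:ℝ))^k := by rw [hfe, mul_pow]
            _ ≤ ((k:ℝ)/θ)^k * Real.exp θ := by
                apply mul_le_mul_of_nonneg_left _ (by positivity)
                calc (1 + θ/(k:ℝ))^k ≤ Real.exp (θ/(k:ℝ)) ^ k := h3
                  _ = Real.exp θ := h4
            _ ≤ ((k:ℝ)/θ)^k * Real.exp 1 := by
                apply mul_le_mul_of_nonneg_left h5 (by positivity)
        have hEk : Real.exp 1 * Real.exp 1 ^ (k-1) = Real.exp 1 ^ k := by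
          rw [← pow_succ']
          congr 1
          omega
        have key : (((N+k).choose k : ℕ) : ℝ) * (k:ℝ)^k ≤ (Real.exp 1/θ)^k * (k:ℝ)^k := by
          have hch0 : (0:ℝ) ≤ (((N+k).choose k : ℕ) : ℝ) := by positivity
          calc (((N+k).choose k : ℕ) : ℝ) * (k:ℝ)^k
              ≤ (((N+k).choose k : ℕ) : ℝ) * ((k.factorial : ℝ) * Real.exp 1 ^ (k-1)) :=
                mul_le_mul_of_nonneg_left hB hch0
            _ = ((((N+k).choose k : ℕ) : ℝ) * (k.factorial : ℝ)) * Real.exp 1 ^ (k-1) := by ring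
            _ ≤ (((N+k : ℕ)):ℝ)^k * Real.exp 1 ^ (k-1) :=
                mul_le_mul_of_nonneg_right hA (by positivity)
            _ ≤ (((k:ℝ)/θ)^k * Real.exp 1) * Real.exp 1 ^ (k-1) :=
                mul_le_mul_of_nonneg_right hC (by positivity)
            _ = ((k:ℝ)/θ)^k * (Real.exp 1 * Real.exp 1 ^ (k-1)) := by ring
            _ = ((k:ℝ)/θ)^k * Real.exp 1 ^ k := by rw [hEk]
            _ = (Real.exp 1/θ)^k * (k:ℝ)^k := by
                rw [div_pow, div_pow]
                ring
        exact le_of_mul_le_mul_right key (by positivity)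
    calc (W.card : ℝ) ≤ (((N + (q-1)).choose (q-1) : ℕ) : ℝ) := by
          exact_mod_cast hcard2 ▸ hcard1
      _ ≤ (Real.exp 1 / θ) ^ (q-1) := hmain
  · -- covering property
    intro A Λ hA hAΛ
    haveI : Nonempty (Fin q) := ⟨⟨0, hq⟩⟩
    have hWne : W.Nonempty := by
      refine ⟨_, Finset.mem_image.mpr ⟨Pi.single (⟨0, hq⟩ : Fin q) N, ?_, rfl⟩⟩
      rw [Finset.mem_piAntidiag]
      exact ⟨by simp, fun i _ => Finset.mem_univ i⟩
    by_cases hΛ : Λ ≤ 0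
    · obtain ⟨c, hc⟩ := hWne
      refine ⟨c, hc, fun j => ?_⟩
      have hc0 := (hsimplex c hc).1 j
      have h1 : c j * (1-θ) * Λ ≤ 0 :=
        mul_nonpos_of_nonneg_of_nonpos (by positivity) hΛ
      linarith [hA j]
    · push_neg at hΛ
      have hSl : Λ ≤ -∑ j, A j := by linarith
      set S : ℝ := -∑ j, A j with hSdef
      have hS0 : (0:ℝ) < S := lt_of_lt_of_le hΛ hSl
      set t : Fin q → ℝ := fun j => -A j / S with htdef
      have ht0 : ∀ j, 0 ≤ t j := fun j => div_nonneg (by linarith [hA j]) hS0.le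
      have htsum : ∑ j, t j = 1 := by
        rw [htdef]
        simp only
        rw [← Finset.sum_div, Finset.sum_neg_distrib, ← hSdef]
        exact div_self hS0.ne'
      set n : Fin q → ℕ := fun j => ⌊(N:ℝ) * t j / (1-θ)⌋₊ with hndef
      have hsum_n : N ≤ ∑ j, n j := by
        have h1 : ∀ j ∈ Finset.univ, (N:ℝ) * t j / (1-θ) < (n j : ℝ) + 1 :=
          fun j _ => Nat.lt_floor_add_one _
      -- sum
        have h2 : (N:ℝ)/(1-θ) = ∑ j, (N:ℝ) * t j / (1-θ) := by
          rw [← Finset.sum_div, ← Finset.mul_sum, htsum, mul_one]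
        have h3 : (N:ℝ)/(1-θ) < ∑ j, ((n j : ℝ) + 1) := by
          rw [h2]
          exact Finset.sum_lt_sum_of_nonempty Finset.univ_nonempty h1
        have h4 : ∑ j, ((n j : ℝ) + 1) = (∑ j, (n j : ℝ)) + q := by
          rw [Finset.sum_add_distrib]
          simp
        have hcast : ((q-1:ℕ):ℝ) = (q:ℝ) - 1 := by
          have := Nat.cast_sub hq (R := ℝ)
          simpa using this
        have hx' : ((q:ℝ)-1)*(1-θ) ≤ (N:ℝ) * θ := by
          have h := hNx
          rw [hxdef, hcast, div_le_iff₀ hθ0] at h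
          linarith
        have h5 : (N:ℝ) + ((q:ℝ) - 1) ≤ (N:ℝ)/(1-θ) := by
          rw [le_div_iff₀ h1θ]
          nlinarith
        have h6 : (N:ℝ) < (∑ j, (n j : ℝ)) + 1 := by
          have hq1 : (1:ℝ) ≤ (q:ℝ) := by exact_mod_cast hq
          linarith
        have h7 : (N:ℝ) < ((∑ j, n j : ℕ) : ℝ) + 1 := by
          rw [show ((∑ j, n j : ℕ) : ℝ) = ∑ j, (n j : ℝ) by push_cast; rfl]
          exact h6
        have : N < (∑ j, n j) + 1 := by exact_mod_cast h7
        omega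
      obtain ⟨kk, hkk_le, hkk_sum⟩ := aux_exists_sum Finset.univ n N hsum_n
      refine ⟨fun j => (kk j : ℝ)/N, Finset.mem_image.mpr
        ⟨kk, Finset.mem_piAntidiag.mpr ⟨hkk_sum, fun i _ => Finset.mem_univ i⟩, rfl⟩, ?_⟩
      intro j
      have hcj : (kk j : ℝ)/N * (1-θ) ≤ t j := by
        have h1 : (kk j : ℝ) ≤ (n j : ℝ) := by exact_mod_cast hkk_le j
        have h2 : (n j : ℝ) ≤ (N:ℝ) * t j / (1-θ) :=
          Nat.floor_le (div_nonneg (mul_nonneg hN0.le (ht0 j)) h1θ.le)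
        have h3 : (kk j : ℝ) ≤ (N:ℝ) * t j / (1-θ) := le_trans h1 h2
        rw [le_div_iff₀ h1θ] at h3
        rw [div_mul_eq_mul_div, div_le_iff₀ hN0]
        linarith
      have hAj : A j = -(t j * S) := by
        rw [htdef]
        field_simp
      have hp1 : (kk j : ℝ)/N * (1-θ) * Λ ≤ t j * Λ :=
        mul_le_mul_of_nonneg_right hcj hΛ.le
      have hp2 : t j * Λ ≤ t j * S := mul_le_mul_of_nonneg_left hSl (ht0 j)
      linarith [hp1, hp2]
end

section
/- Let f ∈ K̄[x_0, …, x_n] be homogeneous of degree D and let g_0, …, g_n ∈ K̄[x_0, …, x_m] be homogeneous polynomials of equal degree. Then the composite polynomial f(g_0, …, g_n) satisfies h_1(f(g_0, …, g_n)) ≤ h_1(f) + D·h_1(g_0, …, g_n). -/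
/-- A family of normalized absolute values on a field `K` (modelling the places of a
number field): each absolute value is either archimedean, i.e. of the form
`|σ(·)|^{w_v}` for a complex embedding `σ` and a weight `w_v`, or non-archimedean
(ultrametric); only finitely many places are archimedean; for each nonzero `x` only
finitely many absolute values differ from `1`, and the product formula holds. -/
structure AbsValueFamily (K : Type*) [Field K] where
  V : Type
  A : V → AbsoluteValue K ℝ
  arch : V → Prop
  archFinite : {v | arch v}.Finite
  w : V → ℝ
  wpos : ∀ v, arch v → 0 < w v
  emb : (v : V) → arch v → (K →+* ℂ)
  hemb : ∀ (v : V) (h : arch v) (x : K), A v x = ‖emb v h x‖ ^ w v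
  nonarch : ∀ v : V, ¬ arch v → ∀ x y : K, A v (x + y) ≤ max (A v x) (A v y)
  finiteSupport : ∀ x : K, x ≠ 0 → (Function.mulSupport fun v => A v x).Finite
  product_formula : ∀ x : K, x ≠ 0 → ∏ᶠ v, A v x = 1

variable {K : Type*} [Field K]

/-- The sup-norm `‖c‖_v = max_i |c_i|_v` of a vector of elements of `K` at a place `v`. -/
noncomputable def AbsValueFamily.normSup (P : AbsValueFamily K) {ι : Type*}
    (c : ι → K) (v : P.V) : ℝ := ⨆ i, P.A v (c i)

open Classical in
/-- The norm `‖c‖_{v,1}`: the (weighted) `L¹`-norm of the coefficient vector at an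
archimedean place, and the sup-norm at a non-archimedean place. -/
noncomputable def AbsValueFamily.norm1 (P : AbsValueFamily K) {ι : Type*}
    (c : ι → K) (v : P.V) : ℝ :=
  if h : P.arch v then (∑ᶠ i, ‖P.emb v h (c i)‖) ^ P.w v
  else ⨆ i, P.A v (c i)

/-- The logarithmic height `h(c) = log ∏_v max_i |c_i|_v`. -/
noncomputable def AbsValueFamily.hgt (P : AbsValueFamily K) {ι : Type*} (c : ι → K) : ℝ :=
  Real.log (∏ᶠ v, P.normSup c v)

/-- The logarithmic height `h₁(c) = log ∏_v ‖c‖_{v,1}`. -/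
noncomputable def AbsValueFamily.hgt1 (P : AbsValueFamily K) {ι : Type*} (c : ι → K) : ℝ :=
  Real.log (∏ᶠ v, P.norm1 c v)

/-!
At every place `v` the composite satisfies `‖f(g)‖_{v,1} ≤ ‖f‖_{v,1} · ‖g‖_{v,1}^D`. Expand
`f(g) = ∑_d c_d ∏ᵢ gᵢ^{dᵢ}`: at an archimedean place the `ℓ¹`-norm of the coefficients is
subadditive and submultiplicative, at a non-archimedean place the sup-norm of the coefficients is
ultrametric and submultiplicative, and every monomial `∏ᵢ gᵢ^{dᵢ}` that occurs has total degree
`D`, so its norm is at most `‖g‖^D`. Multiplying over all places and taking logarithms gives the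
height inequality; the product formula shows `∏_v ‖c‖_{v,1} ≥ 1` for every nonzero `c`, so all
the logarithms are taken of positive numbers.
-/

open Function

theorem bddAbove_range_of_finite_support {α : Type*} {f : α → ℝ} (h : (support f).Finite) :
    BddAbove (Set.range f) :=
  ((h.image f).insert 0).bddAbove.mono (range_subset_insert_image_support f)

theorem AbsoluteValue.finite_support_comp {R ι : Type*} [Semiring R] (A : AbsoluteValue R ℝ)
    {c : ι → R} (hc : (support c).Finite) : (support fun i => A (c i)).Finite :=
  hc.subset fun i hi h0 => hi (by simp [h0])

theorem Finset.apply_prod_pow_le_pow_sum_of_submultiplicative {M ι : Type*} [CommMonoid M]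
    (N : M → ℝ) (h0 : ∀ x, 0 ≤ N x) (h1 : N 1 ≤ 1) (hmul : ∀ x y, N (x * y) ≤ N x * N y)
    (s : Finset ι) (x : ι → M) (d : ι → ℕ) {B : ℝ} (hB : ∀ i ∈ s, N (x i) ≤ B) :
    N (∏ i ∈ s, x i ^ d i) ≤ B ^ ∑ i ∈ s, d i := by
  have hpow (y : M) (k : ℕ) : N (y ^ k) ≤ N y ^ k := by
    simpa using Finset.le_prod_of_submultiplicative_of_nonneg N h0 h1 hmul (range k) fun _ => y
  calc N (∏ i ∈ s, x i ^ d i) ≤ ∏ i ∈ s, N (x i ^ d i) :=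
        Finset.le_prod_of_submultiplicative_of_nonneg N h0 h1 hmul s _
    _ ≤ ∏ i ∈ s, B ^ d i := Finset.prod_le_prod (fun i _ => h0 _) fun i hi =>
        (hpow _ _).trans (pow_le_pow_left₀ (h0 _) (hB i hi) _)
    _ = B ^ ∑ i ∈ s, d i := Finset.prod_pow_eq_pow_sum _ _ _

namespace MvPolynomial

variable {R σ : Type*} [CommSemiring R]

theorem finite_support_coeff (p : MvPolynomial σ R) :
    (Function.support fun μ => coeff μ p).Finite :=
  p.support.finite_toSet.subset fun _ => mem_support_iff.mpr

theorem finite_support_coeff_uncurry {ι : Type*} [Finite ι] (g : ι → MvPolynomial σ R) :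
    (Function.support fun p : ι × (σ →₀ ℕ) => coeff p.2 (g p.1)).Finite :=
  (Set.finite_univ.prod (Set.finite_iUnion fun i => finite_support_coeff (g i))).subset
    fun p hp => ⟨trivial, Set.mem_iUnion.mpr ⟨p.1, hp⟩⟩

theorem aeval_eq_sum_C_mul_prod_pow {ι : Type*} [Fintype ι] (g : ι → MvPolynomial σ R)
    (f : MvPolynomial ι R) : aeval g f = ∑ d ∈ f.support, C (coeff d f) * ∏ i, g i ^ d i := by
  rw [aeval_def, eval₂_eq', algebraMap_eq]

theorem IsHomogeneous.sum_eq_of_mem_support {ι : Type*} [Fintype ι] {D : ℕ}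
    {f : MvPolynomial ι R} (hf : f.IsHomogeneous D) {d : ι →₀ ℕ} (hd : d ∈ f.support) :
    ∑ i, d i = D := by
  rw [← Finsupp.degree_eq_sum, Finsupp.degree_eq_weight_one]
  exact hf (mem_support_iff.mp hd)

section L1Norm

variable (A : AbsoluteValue R ℝ)

noncomputable def l1Norm (p : MvPolynomial σ R) : ℝ := ∑ᶠ μ, A (coeff μ p)

theorem l1Norm_eq_sum_of_support_subset {p : MvPolynomial σ R} {s : Finset (σ →₀ ℕ)}
    (h : p.support ⊆ s) : l1Norm A p = ∑ μ ∈ s, A (coeff μ p) :=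
  finsum_eq_sum_of_support_subset _ fun μ hμ =>
    h (mem_support_iff.mpr fun h0 => hμ (by simp [h0]))

theorem l1Norm_nonneg (p : MvPolynomial σ R) : 0 ≤ l1Norm A p :=
  finsum_nonneg fun _ => A.nonneg _

@[simp]
theorem l1Norm_zero : l1Norm A (0 : MvPolynomial σ R) = 0 := by
  simp [l1Norm]

theorem l1Norm_monomial (a : σ →₀ ℕ) (c : R) : l1Norm A (monomial a c) = A c := by
  classical
  rw [l1Norm, finsum_eq_single _ a fun μ hμ => by simp [coeff_monomial, Ne.symm hμ]]
  simp

theorem l1Norm_add_le (p q : MvPolynomial σ R) :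
    l1Norm A (p + q) ≤ l1Norm A p + l1Norm A q := by
  classical
  rw [l1Norm_eq_sum_of_support_subset A support_add,
    l1Norm_eq_sum_of_support_subset A Finset.subset_union_left,
    l1Norm_eq_sum_of_support_subset A Finset.subset_union_right, ← Finset.sum_add_distrib]
  exact Finset.sum_le_sum fun μ _ => by simpa using A.add_le _ _

theorem l1Norm_sum_le {ι : Type*} (s : Finset ι) (p : ι → MvPolynomial σ R) :
    l1Norm A (∑ i ∈ s, p i) ≤ ∑ i ∈ s, l1Norm A (p i) :=
  Finset.le_sum_of_subadditive _ (l1Norm_zero A).le (l1Norm_add_le A) s p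

theorem l1Norm_mul_le (p q : MvPolynomial σ R) :
    l1Norm A (p * q) ≤ l1Norm A p * l1Norm A q := by
  classical
  calc l1Norm A (p * q)
      = l1Norm A (∑ a ∈ p.support, ∑ b ∈ q.support,
          monomial a (coeff a p) * monomial b (coeff b q)) := by
        rw [← Finset.sum_mul_sum, ← as_sum, ← as_sum]
    _ ≤ ∑ a ∈ p.support, ∑ b ∈ q.support, A (coeff a p) * A (coeff b q) :=
        (l1Norm_sum_le A _ _).trans <| Finset.sum_le_sum fun a _ =>
          (l1Norm_sum_le A _ _).trans_eq <| by simp [monomial_mul, l1Norm_monomial]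
    _ = l1Norm A p * l1Norm A q := by
        rw [l1Norm_eq_sum_of_support_subset A subset_rfl,
          l1Norm_eq_sum_of_support_subset A subset_rfl, Finset.sum_mul_sum]

theorem l1Norm_one_le [Nontrivial R] : l1Norm A (1 : MvPolynomial σ R) ≤ 1 := by
  rw [← C_1, C_apply, l1Norm_monomial, A.map_one]

theorem l1Norm_C_mul_le (c : R) (p : MvPolynomial σ R) :
    l1Norm A (C c * p) ≤ A c * l1Norm A p :=
  (l1Norm_mul_le A _ _).trans_eq <| by rw [C_apply, l1Norm_monomial]

theorem l1Norm_aeval_le [Nontrivial R] {ι : Type*} [Fintype ι] {D : ℕ} {f : MvPolynomial ι R}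
    (hf : f.IsHomogeneous D) {g : ι → MvPolynomial σ R} {B : ℝ}
    (hB : ∀ i, l1Norm A (g i) ≤ B) :
    l1Norm A (aeval g f) ≤ l1Norm A f * B ^ D := by
  have hmonomial (d) (hd : d ∈ f.support) : l1Norm A (∏ i, g i ^ d i) ≤ B ^ D :=
    hf.sum_eq_of_mem_support hd ▸
      Finset.apply_prod_pow_le_pow_sum_of_submultiplicative _ (l1Norm_nonneg A)
        (l1Norm_one_le A) (l1Norm_mul_le A) _ _ _ fun i _ => hB i
  calc l1Norm A (aeval g f)
      ≤ ∑ d ∈ f.support, l1Norm A (C (coeff d f) * ∏ i, g i ^ d i) := by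
        rw [aeval_eq_sum_C_mul_prod_pow]
        exact l1Norm_sum_le A _ _
    _ ≤ ∑ d ∈ f.support, A (coeff d f) * B ^ D := Finset.sum_le_sum fun d hd =>
        (l1Norm_C_mul_le A _ _).trans (mul_le_mul_of_nonneg_left (hmonomial d hd) (A.nonneg _))
    _ = l1Norm A f * B ^ D := by
        rw [← Finset.sum_mul, l1Norm_eq_sum_of_support_subset A subset_rfl]

theorem l1Norm_le_finsum_coeff {ι : Type*} [Fintype ι] (g : ι → MvPolynomial σ R) (i : ι) :
    l1Norm A (g i) ≤ ∑ᶠ p : ι × (σ →₀ ℕ), A (coeff p.2 (g p.1)) := by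
  rw [finsum_curry _ (A.finite_support_comp (finite_support_coeff_uncurry g)),
    finsum_eq_sum_of_fintype]
  exact Finset.single_le_sum (fun j _ => l1Norm_nonneg A (g j)) (Finset.mem_univ i)

end L1Norm

section SupNorm

variable (A : AbsoluteValue R ℝ)

noncomputable def supNorm (p : MvPolynomial σ R) : ℝ := ⨆ μ, A (coeff μ p)

theorem supNorm_nonneg (p : MvPolynomial σ R) : 0 ≤ supNorm A p :=
  Real.iSup_nonneg fun _ => A.nonneg _

theorem le_supNorm (p : MvPolynomial σ R) (μ : σ →₀ ℕ) : A (coeff μ p) ≤ supNorm A p :=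
  le_ciSup (bddAbove_range_of_finite_support (A.finite_support_comp (finite_support_coeff p))) μ

theorem supNorm_le {p : MvPolynomial σ R} {B : ℝ} (hB : 0 ≤ B) (h : ∀ μ, A (coeff μ p) ≤ B) :
    supNorm A p ≤ B :=
  Real.iSup_le h hB

@[simp]
theorem supNorm_zero : supNorm A (0 : MvPolynomial σ R) = 0 := by
  simp [supNorm]

theorem supNorm_C_mul_le (c : R) (p : MvPolynomial σ R) :
    supNorm A (C c * p) ≤ A c * supNorm A p :=
  supNorm_le A (mul_nonneg (A.nonneg c) (supNorm_nonneg A p)) fun μ => by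
    rw [coeff_C_mul, map_mul]
    exact mul_le_mul_of_nonneg_left (le_supNorm A p μ) (A.nonneg c)

theorem supNorm_one_le [Nontrivial R] : supNorm A (1 : MvPolynomial σ R) ≤ 1 :=
  supNorm_le A zero_le_one fun μ => by
    classical
    rw [coeff_one]
    split_ifs <;> simp

theorem supNorm_le_iSup_coeff {ι : Type*} [Finite ι] (g : ι → MvPolynomial σ R) (i : ι) :
    supNorm A (g i) ≤ ⨆ p : ι × (σ →₀ ℕ), A (coeff p.2 (g p.1)) :=
  supNorm_le A (Real.iSup_nonneg fun _ => A.nonneg _) fun μ =>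
    le_ciSup (f := fun p : ι × (σ →₀ ℕ) => A (coeff p.2 (g p.1)))
      (bddAbove_range_of_finite_support
        (A.finite_support_comp (finite_support_coeff_uncurry g))) (i, μ)

variable {A}

theorem isNonarchimedean_supNorm (hA : IsNonarchimedean A) :
    IsNonarchimedean (supNorm A : MvPolynomial σ R → ℝ) := fun p q =>
  supNorm_le A (le_sup_of_le_left (supNorm_nonneg A p)) fun μ => by
    simpa using (hA _ _).trans (sup_le_sup (le_supNorm A p μ) (le_supNorm A q μ))

theorem supNorm_mul_le (hA : IsNonarchimedean A) (p q : MvPolynomial σ R) :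
    supNorm A (p * q) ≤ supNorm A p * supNorm A q := by
  classical
  refine supNorm_le A (mul_nonneg (supNorm_nonneg A p) (supNorm_nonneg A q)) fun μ => ?_
  rw [coeff_mul]
  refine (hA.apply_sum_le_sup ⟨(0, μ), by simp⟩).trans (Finset.sup'_le _ _ fun x _ => ?_)
  rw [map_mul]
  exact mul_le_mul (le_supNorm A p _) (le_supNorm A q _) (A.nonneg _) (supNorm_nonneg A p)

theorem supNorm_aeval_le [Nontrivial R] (hA : IsNonarchimedean A) {ι : Type*} [Fintype ι]
    {D : ℕ} {f : MvPolynomial ι R} (hf : f.IsHomogeneous D) {g : ι → MvPolynomial σ R} {B : ℝ}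
    (hB : ∀ i, supNorm A (g i) ≤ B) :
    supNorm A (aeval g f) ≤ supNorm A f * B ^ D := by
  rcases f.support.eq_empty_or_nonempty with hf0 | hne
  · simp [support_eq_empty.mp hf0]
  have hmonomial (d) (hd : d ∈ f.support) : supNorm A (∏ i, g i ^ d i) ≤ B ^ D :=
    hf.sum_eq_of_mem_support hd ▸
      Finset.apply_prod_pow_le_pow_sum_of_submultiplicative _ (supNorm_nonneg A)
        (supNorm_one_le A) (supNorm_mul_le hA) _ _ _ fun i _ => hB i
  rw [aeval_eq_sum_C_mul_prod_pow]
  refine ((isNonarchimedean_supNorm hA).apply_sum_le_sup hne).trans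
    (Finset.sup'_le _ _ fun d hd => ?_)
  exact (supNorm_C_mul_le A _ _).trans (mul_le_mul (le_supNorm A f d) (hmonomial d hd)
    (supNorm_nonneg A _) (supNorm_nonneg A f))

end SupNorm

end MvPolynomial

open MvPolynomial

namespace AbsValueFamily

variable (P : AbsValueFamily K) {ι : Type*}

theorem norm1_nonneg (c : ι → K) (v : P.V) : 0 ≤ P.norm1 c v := by
  unfold norm1
  split_ifs
  · exact Real.rpow_nonneg (finsum_nonneg fun _ => norm_nonneg _) _
  · exact Real.iSup_nonneg fun _ => (P.A v).nonneg _

@[simp]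
theorem norm1_zero (v : P.V) : P.norm1 (0 : ι → K) v = 0 := by
  unfold norm1
  split_ifs with h
  · simp [Real.zero_rpow (P.wpos v h).ne']
  · simp

theorem le_norm1 {c : ι → K} (hc : (support c).Finite) (v : P.V) (i : ι) :
    P.A v (c i) ≤ P.norm1 c v := by
  unfold norm1
  split_ifs with h
  · rw [P.hemb v h]
    refine Real.rpow_le_rpow (norm_nonneg _) ?_ (P.wpos v h).le
    exact single_le_finsum (f := fun j => ‖P.emb v h (c j)‖) i
      ((NumberField.place (P.emb v h)).finite_support_comp hc) fun j => norm_nonneg _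
  · exact le_ciSup (f := fun j => P.A v (c j))
      (bddAbove_range_of_finite_support ((P.A v).finite_support_comp hc)) i

theorem norm1_pos {c : ι → K} (hc : (support c).Finite) (hc0 : c ≠ 0) (v : P.V) :
    0 < P.norm1 c v := by
  obtain ⟨i, hi⟩ := Function.ne_iff.mp hc0
  exact ((P.A v).pos hi).trans_le (P.le_norm1 hc v i)

theorem hasFiniteMulSupport_norm1 {c : ι → K} (hc : (support c).Finite) (hc0 : c ≠ 0) :
    HasFiniteMulSupport (P.norm1 c) := by
  obtain ⟨i₀, hi₀⟩ := Function.ne_iff.mp hc0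
  refine (P.archFinite.union (hc.biUnion fun i hi => P.finiteSupport _ hi)).subset
    fun v hv => by_contra fun hvB => hv ?_
  simp only [Set.mem_union, Set.mem_ofPred_eq, Set.mem_iUnion, mem_mulSupport, not_or,
    not_exists, not_not] at hvB
  obtain ⟨harch, hone⟩ := hvB
  refine le_antisymm ?_ ((hone i₀ hi₀).symm.le.trans (P.le_norm1 hc v i₀))
  rw [norm1, dif_neg harch]
  refine Real.iSup_le (fun i => ?_) zero_le_one
  by_cases hci : c i = 0
  · simp [hci]
  · exact (hone i hci).le

theorem one_le_finprod_norm1 {c : ι → K} (hc : (support c).Finite) (hc0 : c ≠ 0) :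
    1 ≤ ∏ᶠ v, P.norm1 c v := by
  obtain ⟨i, hi⟩ := Function.ne_iff.mp hc0
  rw [← P.product_formula _ hi]
  exact finprod_le_finprod (P.finiteSupport _ hi) (fun v => (P.A v).nonneg _)
    (P.hasFiniteMulSupport_norm1 hc hc0) fun v => P.le_norm1 hc v i

-- `∏ᶠ` of the zero function is `0` when there are finitely many places and the junk value `1`
-- otherwise; either way its logarithm vanishes.
@[simp]
theorem hgt1_zero : P.hgt1 (0 : ι → K) = 0 := by
  classical
  simp only [hgt1, norm1_zero, finprod_def]
  split_ifs
  · rw [Finset.prod_const, Real.log_pow, Real.log_zero, mul_zero]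
  · exact Real.log_one

theorem hgt1_nonneg {c : ι → K} (hc : (support c).Finite) : 0 ≤ P.hgt1 c := by
  rcases eq_or_ne c 0 with rfl | hc0
  · rw [hgt1_zero]
  · exact Real.log_nonneg (P.one_le_finprod_norm1 hc hc0)

theorem hgt1_le_log_finprod {c : ι → K} {y : P.V → ℝ} (hc : (support c).Finite) (hc0 : c ≠ 0)
    (hy : HasFiniteMulSupport y) (h : ∀ v, P.norm1 c v ≤ y v) :
    P.hgt1 c ≤ Real.log (∏ᶠ v, y v) :=
  Real.log_le_log (one_pos.trans_le (P.one_le_finprod_norm1 hc hc0))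
    (finprod_le_finprod (P.hasFiniteMulSupport_norm1 hc hc0) (P.norm1_nonneg c) hy h)

theorem hgt1_le_of_norm1_le {ι' ι'' : Type*} {c : ι → K} {a : ι' → K} {b : ι'' → K} {D : ℕ}
    (hc : (support c).Finite) (ha : (support a).Finite) (hb : (support b).Finite)
    (h : ∀ v, P.norm1 c v ≤ P.norm1 a v * P.norm1 b v ^ D) :
    P.hgt1 c ≤ P.hgt1 a + D * P.hgt1 b := by
  rcases eq_or_ne c 0 with rfl | hc0
  · rw [hgt1_zero]
    exact add_nonneg (P.hgt1_nonneg ha) (mul_nonneg D.cast_nonneg (P.hgt1_nonneg hb))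
  rcases isEmpty_or_nonempty P.V with hV | ⟨⟨v₀⟩⟩
  · simp [hgt1, finprod_of_isEmpty]
  have hv₀ := (P.norm1_pos hc hc0 v₀).trans_le (h v₀)
  have ha0 : a ≠ 0 := by rintro rfl; simp at hv₀
  have hfa := P.hasFiniteMulSupport_norm1 ha ha0
  -- For `D = 0` the family `b` may vanish, and then `P.norm1 b` has no finite multiplicative
  -- support.
  rcases eq_or_ne D 0 with rfl | hD
  · simpa [hgt1] using P.hgt1_le_log_finprod hc hc0 hfa (by simpa using h)
  have hb0 : b ≠ 0 := by rintro rfl; simp [hD] at hv₀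
  have hfb := P.hasFiniteMulSupport_norm1 hb hb0
  calc P.hgt1 c ≤ Real.log (∏ᶠ v, P.norm1 a v * P.norm1 b v ^ D) :=
        P.hgt1_le_log_finprod hc hc0 (hfa.mul (hfb.pow D)) h
    _ = P.hgt1 a + D * P.hgt1 b := by
        rw [finprod_mul_distrib (g := fun v => P.norm1 b v ^ D) hfa (hfb.pow D),
          ← finprod_pow hfb,
          Real.log_mul (one_pos.trans_le (P.one_le_finprod_norm1 ha ha0)).ne'
            (pow_pos (one_pos.trans_le (P.one_le_finprod_norm1 hb hb0)) D).ne',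
          Real.log_pow]
        rfl

theorem norm1_coeff_aeval_le {σ : Type*} [Fintype ι] {D : ℕ} {f : MvPolynomial ι K}
    (hf : f.IsHomogeneous D) (g : ι → MvPolynomial σ K) (v : P.V) :
    P.norm1 (fun μ => coeff μ (aeval g f)) v ≤
      P.norm1 (fun d => coeff d f) v *
        P.norm1 (fun p : ι × (σ →₀ ℕ) => coeff p.2 (g p.1)) v ^ D := by
  unfold norm1
  split_ifs with h
  · set A := NumberField.place (P.emb v h)
    change l1Norm A (aeval g f) ^ P.w v ≤
      l1Norm A f ^ P.w v * ((∑ᶠ p : ι × (σ →₀ ℕ), A (coeff p.2 (g p.1))) ^ P.w v) ^ D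
    rw [Real.rpow_pow_comm (finsum_nonneg fun _ => A.nonneg _),
      ← Real.mul_rpow (l1Norm_nonneg A f) (pow_nonneg (finsum_nonneg fun _ => A.nonneg _) D)]
    exact Real.rpow_le_rpow (l1Norm_nonneg A _)
      (l1Norm_aeval_le A hf (l1Norm_le_finsum_coeff A g)) (P.wpos v h).le
  · exact supNorm_aeval_le (P.nonarch v h) hf (supNorm_le_iSup_coeff (P.A v) g)

end AbsValueFamily

theorem height1_of_composition_le_general (P : AbsValueFamily K) (n m D : ℕ)
    (f : MvPolynomial (Fin (n + 1)) K) (hf : f.IsHomogeneous D)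
    (g : Fin (n + 1) → MvPolynomial (Fin (m + 1)) K) :
    P.hgt1 (fun μ : Fin (m + 1) →₀ ℕ => MvPolynomial.coeff μ (MvPolynomial.aeval g f)) ≤
      P.hgt1 (fun μ : Fin (n + 1) →₀ ℕ => MvPolynomial.coeff μ f) +
        D * P.hgt1 (fun p : Fin (n + 1) × (Fin (m + 1) →₀ ℕ) =>
          MvPolynomial.coeff p.2 (g p.1)) :=
  P.hgt1_le_of_norm1_le (finite_support_coeff _) (finite_support_coeff f)
    (finite_support_coeff_uncurry g) (P.norm1_coeff_aeval_le hf g)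

/-- For `f` homogeneous of degree `D` and `g_0, …, g_n` homogeneous of equal degree `e`,
the composite satisfies `h₁(f(g_0,…,g_n)) ≤ h₁(f) + D·h₁(g_0,…,g_n)`. -/
theorem height1_of_composition_le (P : AbsValueFamily K) (n m D e : ℕ)
    (f : MvPolynomial (Fin (n + 1)) K) (hf : f.IsHomogeneous D)
    (g : Fin (n + 1) → MvPolynomial (Fin (m + 1)) K)
    (hg : ∀ i, (g i).IsHomogeneous e) :
    P.hgt1 (fun μ : Fin (m + 1) →₀ ℕ => MvPolynomial.coeff μ (MvPolynomial.aeval g f)) ≤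
      P.hgt1 (fun μ : Fin (n + 1) →₀ ℕ => MvPolynomial.coeff μ f) +
        D * P.hgt1 (fun p : Fin (n + 1) × (Fin (m + 1) →₀ ℕ) =>
          MvPolynomial.coeff p.2 (g p.1)) :=
  height1_of_composition_le_general P n m D f hf g
end

section
/- Let Y ⊂ ℙ^R be a projective variety of dimension n and degree D over K̄ with Chow form F_Y, and let c = (c_0, …, c_R) be a tuple of reals. Suppose {i_0, …, i_n} ⊆ {0, …, R} satisfies Y(K̄) ∩ {y_{i_0} = 0, …, y_{i_n} = 0} = ∅. Then the Chow weight satisfies e_Y(c)/((n+1)D) ≥ (c_{i_0} + ⋯ + c_{i_n})/(n+1). -/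
open MvPolynomial

/-- Lemma 3.1: lower bound for the Chow weight. `Y` is (the affine cone of) a
projective variety of dimension `n` and degree `D ≥ 1` in `ℙ^R` over an algebraically
closed field `k`, with Chow form `F`: a nonzero polynomial in `n+1` blocks
`u^(0), …, u^(n)` of `R+1` variables, homogeneous of degree `D` in each block, which
vanishes at `u` iff `Y` meets the `n+1` hyperplanes `Σ_i u_i^{(h)} y_i = 0`
nontrivially. The Chow weight `e_Y(c)` of `Y` with respect to a tuple
`c = (c_0, …, c_R)` of reals is the largest exponent of `t` occurring after
substituting `t^{c_i}·u_i^{(h)}`, i.e. the maximum over the monomials `μ` of `F` of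
`Σ_{(h,i)} μ(h,i)·c_i`. If `{i_0, …, i_n}` is a subset of `{0, …, R}` with
`Y ∩ {y_{i_0} = 0, …, y_{i_n} = 0} = ∅`, then
`e_Y(c)/((n+1)D) ≥ (c_{i_0} + ⋯ + c_{i_n})/(n+1)`. -/
theorem chow_weight_lower_bound {k : Type*} [Field k] [IsAlgClosed k]
    (n R D : ℕ) (hD : 0 < D) (Y : Set (Fin (R + 1) → k))
    (F : MvPolynomial (Fin (n + 1) × Fin (R + 1)) k) (hF0 : F ≠ 0)
    (hFdeg : ∀ μ ∈ F.support, ∀ h : Fin (n + 1), (∑ i : Fin (R + 1), μ (h, i)) = D)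
    (hChow : ∀ u : Fin (n + 1) → Fin (R + 1) → k,
      eval (fun p => u p.1 p.2) F = 0 ↔
        ∃ y ∈ Y, y ≠ 0 ∧ ∀ h : Fin (n + 1), ∑ i, u h i * y i = 0)
    (c : Fin (R + 1) → ℝ) (ι : Fin (n + 1) → Fin (R + 1)) (hι : Function.Injective ι)
    (hempty : ∀ y ∈ Y, (∀ j, y (ι j) = 0) → y = 0) :
    (F.support.sup'
        (by simpa [Finset.nonempty_iff_ne_empty, MvPolynomial.support_eq_empty] using hF0)
        (fun μ => ∑ p ∈ μ.support, (μ p : ℝ) * c p.2)) / (((n : ℝ) + 1) * D) ≥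
      (∑ j, c (ι j)) / ((n : ℝ) + 1) := by
  classical
  set u : Fin (n+1) → Fin (R+1) → k := fun h i => if i = ι h then (1:k) else 0 with hu
  have hne : eval (fun p => u p.1 p.2) F ≠ 0 := by
    intro h0
    obtain ⟨y, hy, hy0, hz⟩ := (hChow u).mp h0
    apply hy0
    apply hempty y hy
    intro j
    have := hz j
    simpa [hu] using this
  rw [MvPolynomial.eval_eq] at hne
  obtain ⟨μ, hμ, hμne⟩ := Finset.exists_ne_zero_of_sum_ne_zero hne
  have hkey : ∀ p : Fin (n+1) × Fin (R+1), p.2 ≠ ι p.1 → μ p = 0 := by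
    intro p hp
    by_contra hmp
    have hps : p ∈ μ.support := Finsupp.mem_support_iff.mpr hmp
    apply hμne
    rw [mul_eq_zero]; right
    refine Finset.prod_eq_zero hps ?_
    rw [show u p.1 p.2 = 0 from by simp [hu, hp], zero_pow hmp]
  have hdiag : ∀ h : Fin (n+1), μ (h, ι h) = D := by
    intro h
    have hd := hFdeg μ hμ h
    rwa [Finset.sum_eq_single (ι h) (fun b _ hb => hkey (h, b) hb)
      (by simp)] at hd
  have hval : (∑ p ∈ μ.support, (μ p : ℝ) * c p.2) = D * ∑ j, c (ι j) := by
    rw [Finset.sum_subset (Finset.subset_univ μ.support)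
      (fun x _ hx => by simp [Finsupp.notMem_support_iff.mp hx])]
    rw [Fintype.sum_prod_type, Finset.mul_sum]
    refine Finset.sum_congr rfl fun h _ => ?_
    rw [Finset.sum_eq_single (ι h)
      (fun b _ hb => by simp [hkey (h, b) hb]) (by simp), hdiag h]
  have hM : D * (∑ j, c (ι j)) ≤ F.support.sup'
      (by simpa [Finset.nonempty_iff_ne_empty, MvPolynomial.support_eq_empty] using hF0)
      (fun μ => ∑ p ∈ μ.support, (μ p : ℝ) * c p.2) := by
    rw [← hval]
    exact Finset.le_sup' (fun ν => ∑ p ∈ ν.support, ((ν p : ℝ)) * c p.2) hμ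
  have hn1 : (0:ℝ) < (n:ℝ) + 1 := by positivity
  have hDpos : (0:ℝ) < (D:ℝ) := by exact_mod_cast hD
  rw [ge_iff_le, div_le_div_iff₀ hn1 (by positivity)]
  nlinarith [mul_le_mul_of_nonneg_right hM hn1.le]
end
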